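/- Let 0 < p < 1/2 and 0 < α ≤ 1. For every δ > 0 there exists ε₀ > 0 such that for every 0 < ε < ε₀ and all sufficiently large n, any dictionary D ⊆ {0,1}^n with #D ≥ 2^{αn} contains a code C ⊆ D whose minimum Hamming distance exceeds np(1+2ε) and whose size satisfies #C ≥ 2^{n(α − H(p) − δ)}. -/

import Mathlib

open scoped BigOperators

/-- The binary entropy function `H(x) = -x log₂ x - (1-x) log₂ (1-x)`. -/
noncomputable def binEnt (x : ℝ) : ℝ :=
  -(x * Real.logb 2 x) - (1 - x) * Real.logb 2 (1 - x)

/-!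
Greedy Gilbert–Varshamov argument inside `D`: pick a word of `D`, discard every word of `D`
within distance `r` of it, and repeat. The chosen words have pairwise distance `> r`, and each
choice discards at most `V(n, r) = ∑_{i ≤ r} (n choose i)` words, so `#D ≤ #C · V(n, r)`.
For `r ≤ nq` with `q ≤ 1/2`, every term `q^i (1-q)^(n-i)`, `i ≤ r`, of the binomial expansion
of `(q + (1 - q))^n = 1` is at least `q^(nq) (1-q)^(n(1-q)) = 2^(-n H(q))`, whence
`V(n, r) ≤ 2^(n H(q))`. Taking `q = p(1 + 2ε)` and `ε` small, continuity of `H` gives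
`H(q) < H(p) + δ`.
-/

open Finset Filter Topology

theorem exists_subset_pairwise_not_rel_card_le_mul {α : Type*} [DecidableEq α]
    (R : α → α → Prop) [DecidableRel R] (hrefl : ∀ x, R x x)
    (hsymm : ∀ x y, R x y → R y x) {B : ℕ} : ∀ D : Finset α, (∀ x ∈ D, #{y ∈ D | R x y} ≤ B) →
      ∃ C ⊆ D, (C : Set α).Pairwise (fun x y => ¬ R x y) ∧ #D ≤ #C * B := by
  intro D
  induction D using Finset.strongInduction with
  | H D ih =>
    intro hB
    obtain rfl | ⟨x, hx⟩ := D.eq_empty_or_nonempty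
    · exact ⟨∅, empty_subset _, by simp, by simp⟩
    set far := {y ∈ D | ¬ R x y}
    have hfar : far ⊂ D := filter_ssubset.2 ⟨x, hx, not_not.2 (hrefl x)⟩
    obtain ⟨C, hCfar, hC, hcard⟩ := ih far hfar fun y hy =>
      (card_le_card (filter_subset_filter _ (filter_subset _ D))).trans
        (hB y (filter_subset _ D hy))
    have hfarC : ∀ y ∈ C, ¬ R x y := fun y hy => (mem_filter.1 (hCfar hy)).2
    refine ⟨insert x C, insert_subset hx (hCfar.trans hfar.subset), ?_, ?_⟩
    · rw [coe_insert, Set.pairwise_insert]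
      exact ⟨hC, fun y hy _ => ⟨hfarC y hy, mt (hsymm y x) (hfarC y hy)⟩⟩
    · calc #D = #far + #{y ∈ D | R x y} := by
            rw [add_comm, card_filter_add_card_filter_not]
        _ ≤ #C * B + B := add_le_add hcard (hB x hx)
        _ = #(insert x C) * B := by
            rw [card_insert_of_notMem fun h => hfarC x h (hrefl x), add_one_mul]

theorem card_hammingBall_le {ι : Type*} [Fintype ι] [DecidableEq ι] (x : ι → Bool) (r : ℕ) :
    #{y | hammingDist x y ≤ r} ≤ ∑ i ∈ range (r + 1), (Fintype.card ι).choose i := by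
  have hdisj : (range (r + 1) : Set ℕ).PairwiseDisjoint
      fun i => powersetCard i (univ : Finset ι) :=
    fun i _ j _ hij => disjoint_left.2 fun s hi hj => hij <| by
      rw [mem_powersetCard] at hi hj; omega
  have hinj : Set.InjOn (fun y : ι → Bool => ({i | x i ≠ y i} : Finset ι)) Set.univ := by
    intro y _ z _ hyz
    funext i
    have := congrArg (i ∈ ·) hyz
    simp only [mem_filter, mem_univ, true_and, eq_iff_iff] at this
    revert this; cases x i <;> cases y i <;> cases z i <;> simp
  calc #{y | hammingDist x y ≤ r}
      ≤ #((range (r + 1)).biUnion fun i => powersetCard i (univ : Finset ι)) := by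
        refine card_le_card_of_injOn _ (fun y hy => ?_) (hinj.mono (Set.subset_univ _))
        simp only [coe_filter, mem_univ, true_and] at hy
        simp only [coe_biUnion, coe_range, Set.mem_Iio, Set.mem_iUnion, mem_coe, mem_powersetCard,
          subset_univ, true_and, exists_prop]
        exact ⟨_, Nat.lt_succ_of_le hy, rfl⟩
    _ = ∑ i ∈ range (r + 1), (Fintype.card ι).choose i := by
        rw [card_biUnion hdisj]; simp

theorem binEnt_eq_binEntropy_div_log_two (x : ℝ) :
    binEnt x = Real.binEntropy x / Real.log 2 := by
  simp only [binEnt, Real.binEntropy, Real.logb, Real.log_inv]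
  ring

theorem continuous_binEnt : Continuous binEnt := by
  simp only [funext binEnt_eq_binEntropy_div_log_two]
  fun_prop

theorem two_rpow_neg_mul_binEnt {q : ℝ} (hq0 : 0 < q) (hq1 : q < 1) (t : ℝ) :
    (2 : ℝ) ^ (-(t * binEnt q)) = q ^ (t * q) * (1 - q) ^ (t * (1 - q)) := by
  have : -(t * binEnt q) = Real.logb 2 q * (t * q) + Real.logb 2 (1 - q) * (t * (1 - q)) := by
    unfold binEnt; ring
  rw [this, Real.rpow_add two_pos, Real.rpow_mul zero_le_two, Real.rpow_mul zero_le_two,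
    Real.rpow_logb two_pos (by norm_num) hq0, Real.rpow_logb two_pos (by norm_num) (by linarith)]

theorem rpow_mul_one_sub_rpow_antitone {q : ℝ} (hq0 : 0 < q) (hq : q ≤ 1 / 2) (c : ℝ) :
    Antitone fun t : ℝ => q ^ t * (1 - q) ^ (c - t) := by
  have hq1 : 0 < 1 - q := by linarith
  have h : ∀ t, q ^ t * (1 - q) ^ (c - t) = (1 - q) ^ c * (q / (1 - q)) ^ t := by
    intro t
    rw [Real.div_rpow hq0.le hq1.le, Real.rpow_sub hq1]
    ring
  intro s t hst
  simp only [h]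
  exact mul_le_mul_of_nonneg_left
    (Real.rpow_le_rpow_of_exponent_ge (by positivity) ((div_le_one hq1).2 (by linarith)) hst)
    (by positivity)

theorem two_rpow_neg_mul_binEnt_le {n i : ℕ} {q : ℝ} (hq0 : 0 < q) (hq : q ≤ 1 / 2)
    (hi : (i : ℝ) ≤ n * q) (hin : i ≤ n) :
    (2 : ℝ) ^ (-((n : ℝ) * binEnt q)) ≤ q ^ i * (1 - q) ^ (n - i) := by
  rw [two_rpow_neg_mul_binEnt hq0 (by linarith), mul_one_sub, ← Real.rpow_natCast,
    ← Real.rpow_natCast, Nat.cast_sub hin]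
  exact rpow_mul_one_sub_rpow_antitone hq0 hq n hi

theorem sum_choose_le_two_rpow_mul_binEnt {n m : ℕ} {q : ℝ} (hq0 : 0 < q) (hq : q ≤ 1 / 2)
    (hm : (m : ℝ) ≤ n * q) :
    ∑ i ∈ range (m + 1), (n.choose i : ℝ) ≤ 2 ^ ((n : ℝ) * binEnt q) := by
  have hq1 : 0 ≤ 1 - q := by linarith
  have hmn : m ≤ n := by
    have : (m : ℝ) ≤ n := hm.trans (mul_le_of_le_one_right n.cast_nonneg (by linarith))
    exact_mod_cast this
  have hsum : (∑ i ∈ range (m + 1), (n.choose i : ℝ)) * 2 ^ (-((n : ℝ) * binEnt q)) ≤ 1 :=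
    calc (∑ i ∈ range (m + 1), (n.choose i : ℝ)) * 2 ^ (-((n : ℝ) * binEnt q))
        ≤ ∑ i ∈ range (m + 1), q ^ i * (1 - q) ^ (n - i) * n.choose i := by
          rw [sum_mul]
          refine sum_le_sum fun i hi => ?_
          have him : i ≤ m := Nat.lt_succ_iff.1 (mem_range.1 hi)
          rw [mul_comm]
          gcongr
          exact two_rpow_neg_mul_binEnt_le hq0 hq
            (le_trans (by exact_mod_cast him) hm) (him.trans hmn)
      _ ≤ ∑ i ∈ range (n + 1), q ^ i * (1 - q) ^ (n - i) * n.choose i :=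
          sum_le_sum_of_subset_of_nonneg (range_subset_range.2 (by omega))
            fun i _ _ => by positivity
      _ = 1 := by rw [← add_pow, add_sub_cancel, one_pow]
  rwa [Real.rpow_neg zero_le_two, ← div_eq_mul_inv, div_le_one (by positivity)] at hsum

theorem exists_subset_hammingDist_gt_card_le {ι : Type*} [Fintype ι] [DecidableEq ι] {q : ℝ}
    (hq0 : 0 < q) (hq : q ≤ 1 / 2) (D : Finset (ι → Bool)) :
    ∃ C ⊆ D, (∀ x ∈ C, ∀ y ∈ C, x ≠ y → Fintype.card ι * q < hammingDist x y) ∧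
      (#D : ℝ) ≤ #C * 2 ^ (Fintype.card ι * binEnt q) := by
  set n := Fintype.card ι
  set m := ⌊n * q⌋₊
  obtain ⟨C, hCD, hC, hcard⟩ := exists_subset_pairwise_not_rel_card_le_mul
    (fun x y => hammingDist x y ≤ m) (fun x => by simp) (fun x y => by simp [hammingDist_comm])
    D fun x _ => (card_le_card (filter_subset_filter _ (subset_univ D))).trans
      (card_hammingBall_le x m)
  refine ⟨C, hCD, fun x hx y hy hxy => ?_, ?_⟩
  · have hm : m + 1 ≤ hammingDist x y := not_le.1 (hC hx hy hxy)
    calc (n : ℝ) * q < m + 1 := Nat.lt_floor_add_one _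
      _ ≤ hammingDist x y := by exact_mod_cast hm
  · calc (#D : ℝ) ≤ #C * ∑ i ∈ range (m + 1), (n.choose i : ℝ) := by exact_mod_cast hcard
      _ ≤ #C * 2 ^ (n * binEnt q) := by
        gcongr
        exact sum_choose_le_two_rpow_mul_binEnt hq0 hq (Nat.floor_le (by positivity))

theorem gv_code_in_dictionary_general
    (p : ℝ) (hp0 : 0 < p) (hp : p < 1 / 2)
    (α : ℝ) :
    ∀ δ > (0 : ℝ), ∃ ε₀ > (0 : ℝ), ∀ ε : ℝ, 0 < ε → ε < ε₀ →
      ∀ᶠ n in Filter.atTop,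
        ∀ D : Finset (Fin n → Bool), (2 : ℝ) ^ (α * (n : ℝ)) ≤ (D.card : ℝ) →
          ∃ C : Finset (Fin n → Bool), C ⊆ D ∧
            (∀ x ∈ C, ∀ y ∈ C, x ≠ y →
              (n : ℝ) * p * (1 + 2 * ε) < (hammingDist x y : ℝ)) ∧
            (2 : ℝ) ^ ((n : ℝ) * (α - binEnt p - δ)) ≤ (C.card : ℝ) := by
  intro δ hδ
  have hlim : Tendsto (fun ε : ℝ => p * (1 + 2 * ε)) (𝓝 0) (𝓝 p) := by
    simpa using (Continuous.tendsto (by fun_prop) 0 :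
      Tendsto (fun ε : ℝ => p * (1 + 2 * ε)) (𝓝 0) (𝓝 (p * (1 + 2 * 0))))
  obtain ⟨ε₀, hε₀, hgood⟩ := Metric.eventually_nhds_iff.1 <|
    (hlim.eventually (gt_mem_nhds hp)).and <|
      (continuous_binEnt.tendsto p).comp hlim |>.eventually
        (gt_mem_nhds (lt_add_of_pos_right _ hδ))
  refine ⟨ε₀, hε₀, fun ε hε hεε₀ => Eventually.of_forall fun n D hD => ?_⟩
  obtain ⟨hq_half, hent : binEnt (p * (1 + 2 * ε)) < binEnt p + δ⟩ :=
    hgood (by rwa [Real.dist_0_eq_abs, abs_of_pos hε])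
  obtain ⟨C, hCD, hdist, hcard⟩ :=
    exists_subset_hammingDist_gt_card_le (by positivity) hq_half.le D
  simp only [Fintype.card_fin] at hdist hcard
  refine ⟨C, hCD, fun x hx y hy hxy => by simpa only [mul_assoc] using hdist x hx y hy hxy, ?_⟩
  calc (2 : ℝ) ^ ((n : ℝ) * (α - binEnt p - δ))
      ≤ 2 ^ (α * n - n * binEnt (p * (1 + 2 * ε))) := by
        gcongr
        · norm_num
        · nlinarith [mul_le_mul_of_nonneg_left hent.le n.cast_nonneg]
    _ = 2 ^ (α * n) / 2 ^ (n * binEnt (p * (1 + 2 * ε))) := Real.rpow_sub two_pos _ _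
    _ ≤ C.card := by rw [div_le_iff₀ (by positivity)]; exact hD.trans hcard

theorem gv_code_in_dictionary
    (p : ℝ) (hp0 : 0 < p) (hp : p < 1 / 2)
    (α : ℝ) (hα0 : 0 < α) (hα1 : α ≤ 1) :
    ∀ δ > (0 : ℝ), ∃ ε₀ > (0 : ℝ), ∀ ε : ℝ, 0 < ε → ε < ε₀ →
      ∀ᶠ n in Filter.atTop,
        ∀ D : Finset (Fin n → Bool), (2 : ℝ) ^ (α * (n : ℝ)) ≤ (D.card : ℝ) →
          ∃ C : Finset (Fin n → Bool), C ⊆ D ∧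
            (∀ x ∈ C, ∀ y ∈ C, x ≠ y →
              (n : ℝ) * p * (1 + 2 * ε) < (hammingDist x y : ℝ)) ∧
            (2 : ℝ) ^ ((n : ℝ) * (α - binEnt p - δ)) ≤ (C.card : ℝ) :=
  gv_code_in_dictionary_general p hp0 hp α
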